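/- For a natural number n ≥ 2, the base-3/2 representation of n − 1 has fewer digits than that of n (equivalently, n is the smallest integer with its number of base-3/2 digits) if and only if the last digit of digits(n) is 0 and no digit of digits(n) other than the first is equal to 2. -/
import Mathlib

def digits : ℕ → List ℕ
  | 0 => []
  | n + 1 => digits (2 * ((n + 1) / 3)) ++ [(n + 1) % 3]
decreasing_by omega

def val (L : List ℕ) : ℚ := L.foldl (fun acc d => 3/2 * acc + d) 0

lemma digits_pos {n : ℕ} (h : 0 < n) :
    digits n = digits (2 * (n / 3)) ++ [n % 3] := by
  cases n with
  | zero => omega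
  | succ m => rw [digits]

lemma digits_ne_nil {n : ℕ} (h : 0 < n) : digits n ≠ [] := by
  rw [digits_pos h]; simp

lemma tail_concat {A : List ℕ} (x : ℕ) (h : A ≠ []) :
    (A ++ [x]).tail = A.tail ++ [x] := by
  cases A with
  | nil => simp at h
  | cons a l => simp

lemma Q : ∀ q : ℕ, 1 ≤ q →
    ((digits (2*q - 2)).length < (digits (2*q)).length ↔ 2 ∉ (digits (2*q)).tail) := by
  intro q
  induction q using Nat.strong_induction_on with
  | _ q ih =>
  intro hq
  rcases Nat.lt_or_ge q 2 with h2 | h2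
  · -- q = 1
    have hq1 : q = 1 := by omega
    subst hq1
    norm_num
    rw [digits_pos (by norm_num : (0:ℕ) < 2)]
    norm_num [digits]
  obtain ⟨t, r, hr, hqtr⟩ : ∃ t r, r < 3 ∧ q = 3*t + r := ⟨q/3, q%3, by omega, by omega⟩
  interval_cases r
  · -- q = 3t, t ≥ 1
    have ht : 1 ≤ t := by omega
    have d1 : digits (2*q) = digits (4*t) ++ [0] := by
      rw [digits_pos (by omega), show 2*(2*q/3) = 4*t by omega, show 2*q%3 = 0 by omega]
    have d2 : digits (2*q - 2) = digits (4*t - 2) ++ [1] := by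
      rw [digits_pos (by omega), show 2*((2*q-2)/3) = 4*t-2 by omega,
        show (2*q-2)%3 = 1 by omega]
    have hQ := ih (2*t) (by omega) (by omega)
    rw [show 2*(2*t) - 2 = 4*t - 2 by omega, show 2*(2*t) = 4*t by omega] at hQ
    rw [d1, d2, tail_concat 0 (digits_ne_nil (by omega))]
    simp only [List.length_append, List.length_singleton, List.mem_append,
      List.mem_singleton, Nat.add_lt_add_iff_right]
    rw [hQ]
    simp
  · -- q = 3t+1, t ≥ 1
    have ht : 1 ≤ t := by omega
    have d1 : digits (2*q) = digits (4*t) ++ [2] := by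
      rw [digits_pos (by omega), show 2*(2*q/3) = 4*t by omega, show 2*q%3 = 2 by omega]
    have d2 : digits (2*q - 2) = digits (4*t) ++ [0] := by
      rw [digits_pos (by omega), show 2*((2*q-2)/3) = 4*t by omega,
        show (2*q-2)%3 = 0 by omega]
    rw [d1, d2, tail_concat 2 (digits_ne_nil (by omega))]
    simp
  · -- q = 3t+2
    have d1 : digits (2*q) = digits (4*t + 2) ++ [1] := by
      rw [digits_pos (by omega), show 2*(2*q/3) = 4*t+2 by omega, show 2*q%3 = 1 by omega]
    have d2 : digits (2*q - 2) = digits (4*t) ++ [2] := by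
      rw [digits_pos (by omega), show 2*((2*q-2)/3) = 4*t by omega,
        show (2*q-2)%3 = 2 by omega]
    have hQ := ih (2*t+1) (by omega) (by omega)
    rw [show 2*(2*t+1) - 2 = 4*t by omega, show 2*(2*t+1) = 4*t+2 by omega] at hQ
    rw [d1, d2, tail_concat 1 (digits_ne_nil (by omega))]
    simp only [List.length_append, List.length_singleton, List.mem_append,
      List.mem_singleton, Nat.add_lt_add_iff_right]
    rw [hQ]
    simp

theorem smallest_iff (n : ℕ) (hn : 2 ≤ n) :
    (digits (n - 1)).length < (digits n).length ↔
      ((digits n).getLast? = some 0 ∧ 2 ∉ (digits n).tail) := by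
  obtain ⟨t, r, hr, hqtr⟩ : ∃ t r, r < 3 ∧ n = 3*t + r := ⟨n/3, n%3, by omega, by omega⟩
  interval_cases r
  · -- n = 3t, t ≥ 1
    have ht : 1 ≤ t := by omega
    have d1 : digits n = digits (2*t) ++ [0] := by
      rw [digits_pos (by omega), show 2*(n/3) = 2*t by omega, show n%3 = 0 by omega]
    have d2 : digits (n - 1) = digits (2*t - 2) ++ [2] := by
      rw [digits_pos (by omega), show 2*((n-1)/3) = 2*t-2 by omega,
        show (n-1)%3 = 2 by omega]
    have hQ := Q t ht
    rw [d1, d2, tail_concat 0 (digits_ne_nil (by omega)), List.getLast?_concat]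
    simp only [List.length_append, List.length_singleton, List.mem_append,
      List.mem_singleton, Nat.add_lt_add_iff_right]
    rw [hQ]
    simp
  · -- n = 3t+1, t ≥ 1
    have ht : 1 ≤ t := by omega
    have d1 : digits n = digits (2*t) ++ [1] := by
      rw [digits_pos (by omega), show 2*(n/3) = 2*t by omega, show n%3 = 1 by omega]
    have d2 : digits (n - 1) = digits (2*t) ++ [0] := by
      rw [digits_pos (by omega), show 2*((n-1)/3) = 2*t by omega,
        show (n-1)%3 = 0 by omega]
    rw [d1, d2, List.getLast?_concat]
    simp
  · -- n = 3t+2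
    have d1 : digits n = digits (2*t) ++ [2] := by
      rw [digits_pos (by omega), show 2*(n/3) = 2*t by omega, show n%3 = 2 by omega]
    have d2 : digits (n - 1) = digits (2*t) ++ [1] := by
      rw [digits_pos (by omega), show 2*((n-1)/3) = 2*t by omega,
        show (n-1)%3 = 1 by omega]
    rw [d1, d2, List.getLast?_concat]
    simp
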